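/- arXiv:2212.05522 — 2 statements merged into one kernel-verified Lean document; each statement's English description precedes it below -/
import Mathlib

section
/- Let 𝓕 be an ω-closed family of nonempty inductive subsets of ω and let S = B_ω^𝓕 ∪ {0} be B_ω^𝓕 with an adjoined zero. Then every Hausdorff locally compact semigroup topology on S (i.e., one making the multiplication jointly continuous) is discrete. -/
/-!
Every member of `𝓕` is a ray `Ici k`, so an element of `B_ω^𝓕` is coded by a triple
`(i, j, k)` of naturals and the space is countable. By the Baire category theorem some nonzero
point `z` is isolated; then so is every nonzero `b`, because `y ↦ u * y * v` sends `b` to `z`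
for suitable `u`, `v` and has finite fibres.

If `0` were not isolated, a compact neighbourhood `K` of `0` would consist of `0` and infinitely
many isolated points, all but finitely many of which lie in any given neighbourhood of `0`.
Continuity of the translations by `(1, 0, Ici a)` and `(0, 1, Ici a)`, where `Ici a` is the
largest member of `𝓕`, moves points of `K` along orbits that stay in `K`, and shows that `K`
contains `(r, 0, Ici a)` and `(0, r, Ici a)` for all large `r`. Both sequences tend to `0`, but
their products `(0, 0, Ici a)` do not, contradicting joint continuity at `(0, 0)`.
-/

/-- For `n : ℕ` and `F ⊆ ω`, `wShift n F` is the set `(−n)+F = {x ∈ ω : x + n ∈ F}`. -/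
def wShift (n : ℕ) (F : Set ℕ) : Set ℕ := {x | x + n ∈ F}

/-- A family `𝓕` of subsets of `ω` is ω-closed if `F₁ ∩ ((−n)+F₂) ∈ 𝓕`
for all `n ∈ ω` and `F₁, F₂ ∈ 𝓕`. -/
def OmegaClosed (𝓕 : Set (Set ℕ)) : Prop :=
  ∀ n : ℕ, ∀ F₁ ∈ 𝓕, ∀ F₂ ∈ 𝓕, F₁ ∩ wShift n F₂ ∈ 𝓕

/-- A subset `F ⊆ ω` is inductive if `n ∈ F` implies `n+1 ∈ F`. -/
def InductiveSet (F : Set ℕ) : Prop := ∀ n : ℕ, n ∈ F → n + 1 ∈ F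

/-- The underlying set `ω × ω × 𝓕` of the semigroup `B_ω^𝓕`. -/
abbrev BF (𝓕 : Set (Set ℕ)) : Type := ℕ × ℕ × {F : Set ℕ // F ∈ 𝓕}

/-- The multiplication of the semigroup `B_ω^𝓕`:
`(i₁,j₁,F₁)·(i₂,j₂,F₂) = (i₁−j₁+i₂, j₂, ((j₁−i₂)+F₁) ∩ F₂)` if `j₁ ≤ i₂`, and
`(i₁, j₁−i₂+j₂, F₁ ∩ ((i₂−j₁)+F₂))` if `j₁ ≥ i₂`. -/
def BFmul {𝓕 : Set (Set ℕ)} (h : OmegaClosed 𝓕) (a b : BF 𝓕) : BF 𝓕 :=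
  if a.2.1 ≤ b.1 then
    (a.1 + (b.1 - a.2.1), b.2.1,
      ⟨wShift (b.1 - a.2.1) a.2.2.1 ∩ b.2.2.1, by
        rw [Set.inter_comm]; exact h _ _ b.2.2.2 _ a.2.2.2⟩)
  else
    (a.1, b.2.1 + (a.2.1 - b.1),
      ⟨a.2.2.1 ∩ wShift (a.2.1 - b.1) b.2.2.1, h _ _ a.2.2.2 _ b.2.2.2⟩)

/-- `B_ω^𝓕` with an adjoined zero; `none` plays the role of the zero `0`. -/
abbrev BF0 (𝓕 : Set (Set ℕ)) : Type := Option (BF 𝓕)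

/-- The multiplication of the semigroup `B_ω^𝓕` with an adjoined zero. -/
def BF0mul {𝓕 : Set (Set ℕ)} (h : OmegaClosed 𝓕) : BF0 𝓕 → BF0 𝓕 → BF0 𝓕
  | some a, some b => some (BFmul h a b)
  | _, _ => none

open Set Filter Topology

theorem iterate_mem_of_eventually_mapsTo {α : Type*} {X : Set α} {f : α → α}
    (hf : ∀ᶠ x in cofinite, x ∈ X → f x ∈ X) (ψ : α → ℕ) (hψ : ∀ x, ψ x ≤ ψ (f x)) :
    ∃ M, ∀ x ∈ X, M < ψ x → ∀ n, f^[n] x ∈ X := by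
  obtain ⟨M, hM⟩ := ((eventually_cofinite.1 hf).image ψ).bddAbove
  refine ⟨M, fun x hx hxM n => ?_⟩
  have key : ∀ n, f^[n] x ∈ X ∧ ψ x ≤ ψ (f^[n] x) := by
    intro n
    induction n with
    | zero => exact ⟨hx, le_rfl⟩
    | succ n ih =>
      rw [Function.iterate_succ_apply']
      refine ⟨?_, ih.2.trans (hψ _)⟩
      by_contra hout
      have : ψ (f^[n] x) ≤ M := hM ⟨_, fun h => hout (h ih.1), rfl⟩
      omega
  exact (key n).1

theorem eventually_mapsTo_image {α β : Type*} {c : α → β} {f : α → α} {g : β → β}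
    (hfg : ∀ x, c (f x) = g (c x)) {X : Set α} (h : ∀ᶠ x in cofinite, x ∈ X → f x ∈ X) :
    ∀ᶠ y in cofinite, y ∈ c '' X → g y ∈ c '' X := by
  rw [eventually_cofinite] at h ⊢
  refine (h.image c).subset fun y hy => ?_
  simp only [mem_ofPred_eq, Classical.not_imp] at hy ⊢
  obtain ⟨⟨x, hx, rfl⟩, hgx⟩ := hy
  exact ⟨x, ⟨hx, fun hfx => hgx ⟨f x, hfx, hfg x⟩⟩, rfl⟩

theorem exists_isOpen_singleton_some {α : Type*} [Countable α] [Nonempty α]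
    [TopologicalSpace (Option α)] [T1Space (Option α)] [BaireSpace (Option α)] :
    ∃ a : α, IsOpen ({some a} : Set (Option α)) := by
  by_contra! h
  have hdense : Dense (⋂ a : α, ({some a}ᶜ : Set (Option α))) :=
    dense_iInter_of_isOpen (fun _ => isOpen_compl_singleton)
      fun a => dense_compl_singleton_iff_not_open.2 (h a)
  have hnone : (⋂ a : α, ({some a}ᶜ : Set (Option α))) = {none} := by
    ext (_ | a) <;> simp
  rw [hnone, dense_iff_closure_eq, isClosed_singleton.closure_eq, eq_univ_iff_forall] at hdense
  exact Option.some_ne_none _ (hdense (some (Classical.arbitrary α)))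

theorem cofinite_inf_principal_le_nhds {X : Type*} [TopologicalSpace X] {x₀ : X} {K : Set X}
    (hK : IsCompact K) (hiso : ∀ x, x ≠ x₀ → IsOpen {x}) : cofinite ⊓ 𝓟 K ≤ 𝓝 x₀ := by
  intro U hU
  rw [mem_inf_principal, mem_cofinite]
  refine ((hK.diff (isOpen_interior (s := U))).finite ?_).subset fun y hy => ?_
  · refine isDiscrete_iff_forall_mem_exists_isOpen.2 fun y hy => ⟨{y}, hiso y ?_, ?_⟩
    · rintro rfl
      exact hy.2 (mem_interior_iff_mem_nhds.2 hU)
    · exact singleton_inter_of_mem hy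
  · simp only [mem_compl_iff, mem_ofPred_eq, Classical.not_imp] at hy
    exact ⟨hy.1, fun h => hy.2 (interior_subset h)⟩

theorem eventually_mapsTo_of_continuous {X : Type*} [TopologicalSpace X] {x₀ : X} {K : Set X}
    (hL : cofinite ⊓ 𝓟 K ≤ 𝓝 x₀) (hK : K ∈ 𝓝 x₀) {f : X → X} (hf : Continuous f)
    (hf0 : f x₀ = x₀) : ∀ᶠ x in cofinite, x ∈ K → f x ∈ K :=
  eventually_inf_principal.1 (hL (hf.tendsto' x₀ x₀ hf0 hK))

theorem tendsto_nhds_of_injective {X : Type*} [TopologicalSpace X] {x₀ : X} {K : Set X}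
    (hL : cofinite ⊓ 𝓟 K ≤ 𝓝 x₀) {e : ℕ → X} (he : Function.Injective e)
    (hK : ∀ᶠ r in atTop, e r ∈ K) : Tendsto e atTop (𝓝 x₀) :=
  (tendsto_inf.2 ⟨Nat.cofinite_eq_atTop ▸ he.tendsto_cofinite, tendsto_principal.2 hK⟩).mono_right
    hL

theorem InductiveSet.mem_of_le {F : Set ℕ} (hF : InductiveSet F) {a b : ℕ} (ha : a ∈ F)
    (hab : a ≤ b) : b ∈ F := by
  induction hab with
  | refl => exact ha
  | step _ ih => exact hF _ ih

theorem InductiveSet.eq_Ici_sInf {F : Set ℕ} (hF : InductiveSet F) (hne : F.Nonempty) :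
    F = Ici (sInf F) :=
  Subset.antisymm (fun _ hx => Nat.sInf_le hx) fun _ hx => hF.mem_of_le (Nat.sInf_mem hne) hx

theorem wShift_Ici (n k : ℕ) : wShift n (Ici k) = Ici (k - n) := by
  ext x
  simp [wShift]

/-- `BFmul` on triples `(i, j, k)` standing for `(i, j, Ici k)` (see `BF.coords_mul`). -/
def mulIci (u v : ℕ × ℕ × ℕ) : ℕ × ℕ × ℕ :=
  if u.2.1 ≤ v.1 then (u.1 + (v.1 - u.2.1), v.2.1, max (u.2.2 - (v.1 - u.2.1)) v.2.2)
  else (u.1, v.2.1 + (u.2.1 - v.1), max u.2.2 (v.2.2 - (u.2.1 - v.1)))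

def swapIJ (t : ℕ × ℕ × ℕ) : ℕ × ℕ × ℕ := (t.2.1, t.1, t.2.2)

theorem swapIJ_involutive : Function.Involutive swapIJ := fun _ => rfl

theorem mulIci_swapIJ (u v : ℕ × ℕ × ℕ) :
    mulIci (swapIJ u) (swapIJ v) = swapIJ (mulIci v u) := by
  obtain ⟨i, j, k⟩ := u
  obtain ⟨i', j', k'⟩ := v
  by_cases h : i ≤ j' <;> by_cases h' : j' ≤ i <;>
    simp only [mulIci, swapIJ, h, h', if_true, if_false, Prod.mk.injEq, true_and] <;> omega

-- The middle index `b.1 + b.2.2 + 1` is large enough that multiplying by `b` only moves it to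
-- `b.2.1 + b.2.2 + 1` and leaves `z.2.2` unchanged; the right factor then cancels it.
theorem mulIci_sandwich (z b : ℕ × ℕ × ℕ) :
    mulIci (mulIci (z.1, b.1 + b.2.2 + 1, z.2.2) b) (b.2.1 + b.2.2 + 1, z.2.1, z.2.2) = z := by
  obtain ⟨i, j, k⟩ := z
  obtain ⟨i', j', k'⟩ := b
  simp only [mulIci]
  split_ifs <;> simp only [Prod.mk.injEq, true_and] at * <;> omega

theorem le_of_mulIci_sandwich_eq {z y : ℕ × ℕ × ℕ} {P Q : ℕ}
    (h : mulIci (mulIci (z.1, P, z.2.2) y) (Q, z.2.1, z.2.2) = z) :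
    y ≤ (P, Q, z.2.2 + P + Q) := by
  obtain ⟨i, j, k⟩ := z
  obtain ⟨i', j', k'⟩ := y
  simp only [mulIci] at h
  split_ifs at h <;> simp only [Prod.mk.injEq, Prod.mk_le_mk] at * <;> omega

theorem fst_one_zero_mulIci (a : ℕ) (t : ℕ × ℕ × ℕ) : (mulIci (1, 0, a) t).1 = t.1 + 1 := by
  simp [mulIci, add_comm]

theorem snd_fst_one_zero_mulIci (a : ℕ) (t : ℕ × ℕ × ℕ) : (mulIci (1, 0, a) t).2.1 = t.2.1 := by
  simp [mulIci]

theorem fst_iterate_one_zero_mulIci (a n : ℕ) (t : ℕ × ℕ × ℕ) :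
    ((mulIci (1, 0, a) ·)^[n] t).1 = t.1 + n := by
  induction n with
  | zero => rfl
  | succ n ih => rw [Function.iterate_succ_apply', fst_one_zero_mulIci, ih, add_assoc]

theorem fst_add_snd_snd_le_mulIci_one_zero (a : ℕ) (t : ℕ × ℕ × ℕ) :
    t.1 + t.2.2 ≤ (mulIci t (1, 0, a)).1 + (mulIci t (1, 0, a)).2.2 := by
  obtain ⟨i, j, k⟩ := t
  simp only [mulIci]
  split_ifs <;> dsimp only <;> omega

theorem iterate_mulIci_one_zero {a : ℕ} {t : ℕ × ℕ × ℕ} (ht : a ≤ t.2.2) (n : ℕ) :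
    (mulIci · (1, 0, a))^[n] t = mulIci t (n, 0, a) := by
  induction n with
  | zero =>
    obtain ⟨i, j, k⟩ := t
    simp only [mulIci] at *
    split_ifs <;> simp only [Function.iterate_zero_apply, Prod.mk.injEq, true_and] <;> omega
  | succ n ih =>
    rw [Function.iterate_succ_apply', ih]
    obtain ⟨i, j, k⟩ := t
    simp only [mulIci]
    split_ifs <;> simp only [Prod.mk.injEq, true_and] at * <;> omega

theorem mulIci_eq_of_le {a n : ℕ} {t : ℕ × ℕ × ℕ} (h : t.2.1 + (t.2.2 - a) ≤ n) :
    mulIci t (n, 0, a) = (t.1 + n - t.2.1, 0, a) := by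
  obtain ⟨i, j, k⟩ := t
  simp only [mulIci] at *
  split_ifs <;> simp only [Prod.mk.injEq, true_and] <;> omega

theorem eventually_row_mem {X : Set (ℕ × ℕ × ℕ)} {a : ℕ} (hX : X.Infinite)
    (ha : ∀ t ∈ X, a ≤ t.2.2)
    (hl : ∀ᶠ t in cofinite, t ∈ X → mulIci (1, 0, a) t ∈ X)
    (hr : ∀ᶠ t in cofinite, t ∈ X → mulIci t (1, 0, a) ∈ X) :
    ∀ᶠ r in atTop, (r, 0, a) ∈ X := by
  -- Left multiplication by `(1, 0, a)` raises `i` and fixes `j`, which makes `i + k` unbounded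
  -- on `X`; right multiplication does not decrease `i + k`, and its orbit from `t` passes
  -- through every `(r, 0, a)` with `r ≥ i + (k - a)`.
  have hunbdd : ∀ M, ∃ t ∈ X, M < t.1 + t.2.2 := by
    obtain ⟨N, hN⟩ := iterate_mem_of_eventually_mapsTo hl (·.2.1)
      fun t => (snd_fst_one_zero_mulIci a t).ge
    intro M
    by_contra! hM
    obtain ⟨t, htX, ht⟩ := not_subset.1 fun h => hX ((finite_Iic (M, N, M)).subset h)
    have hj : N < t.2.1 := by
      have := hM t htX
      simp only [mem_Iic, Prod.le_def, not_and_or, not_le] at ht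
      omega
    have := hM _ (hN t htX hj (M + 1))
    rw [fst_iterate_one_zero_mulIci] at this
    omega
  obtain ⟨N, hN⟩ := iterate_mem_of_eventually_mapsTo hr (fun t => t.1 + t.2.2)
    (fst_add_snd_snd_le_mulIci_one_zero a)
  obtain ⟨t, htX, ht⟩ := hunbdd N
  filter_upwards [eventually_ge_atTop (t.1 + (t.2.2 - a))] with r hr
  have := hN t htX ht (r - t.1 + t.2.1)
  rwa [iterate_mulIci_one_zero (ha t htX), mulIci_eq_of_le (by omega),
    show t.1 + (r - t.1 + t.2.1) - t.2.1 = r by omega] at this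

theorem eventually_col_mem {X : Set (ℕ × ℕ × ℕ)} {a : ℕ} (hX : X.Infinite)
    (ha : ∀ t ∈ X, a ≤ t.2.2)
    (hl : ∀ᶠ t in cofinite, t ∈ X → mulIci (0, 1, a) t ∈ X)
    (hr : ∀ᶠ t in cofinite, t ∈ X → mulIci t (0, 1, a) ∈ X) :
    ∀ᶠ c in atTop, (0, c, a) ∈ X := by
  have hT := swapIJ_involutive.injective.tendsto_cofinite
  refine eventually_row_mem (X := swapIJ ⁻¹' X)
    (hX.preimage (swapIJ_involutive.surjective.range_eq ▸ subset_univ X))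
    (fun t ht => ha (swapIJ t) ht) ?_ ?_
  · filter_upwards [hT.eventually hr] with t ht h
    rw [mem_preimage, ← mulIci_swapIJ]
    exact ht h
  · filter_upwards [hT.eventually hl] with t ht h
    rw [mem_preimage, ← mulIci_swapIJ]
    exact ht h

namespace BF

variable {𝓕 : Set (Set ℕ)}

noncomputable def coords (a : BF 𝓕) : ℕ × ℕ × ℕ := (a.1, a.2.1, sInf a.2.2.1)

theorem coords_injective (h𝓕 : ∀ F ∈ 𝓕, ∃ k, F = Ici k) :
    Function.Injective (coords (𝓕 := 𝓕)) := by
  rintro ⟨i, j, F, hF⟩ ⟨i', j', F', hF'⟩ h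
  obtain ⟨k, rfl⟩ := h𝓕 F hF
  obtain ⟨k', rfl⟩ := h𝓕 F' hF'
  simp only [coords, csInf_Ici, Prod.mk.injEq] at h
  obtain ⟨rfl, rfl, rfl⟩ := h
  rfl

theorem coords_mul (hcl : OmegaClosed 𝓕) (h𝓕 : ∀ F ∈ 𝓕, ∃ k, F = Ici k) (a b : BF 𝓕) :
    coords (BFmul hcl a b) = mulIci (coords a) (coords b) := by
  obtain ⟨i, j, F, hF⟩ := a
  obtain ⟨i', j', F', hF'⟩ := b
  obtain ⟨k, rfl⟩ := h𝓕 F hF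
  obtain ⟨k', rfl⟩ := h𝓕 F' hF'
  simp only [coords, BFmul, mulIci, csInf_Ici]
  split_ifs <;> simp [wShift_Ici]

theorem coords_ray {a : ℕ} (ha : Ici a ∈ 𝓕) (i j : ℕ) :
    coords ((i, j, ⟨Ici a, ha⟩) : BF 𝓕) = (i, j, a) := by
  simp [coords]

theorem exists_maximal_ray (h𝓕 : ∀ F ∈ 𝓕, ∃ k, F = Ici k) (hne : 𝓕.Nonempty) :
    ∃ a, Ici a ∈ 𝓕 ∧ ∀ b : BF 𝓕, a ≤ (coords b).2.2 := by
  classical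
  have hex : ∃ k, Ici k ∈ 𝓕 := by
    obtain ⟨F, hF⟩ := hne
    obtain ⟨k, rfl⟩ := h𝓕 F hF
    exact ⟨k, hF⟩
  refine ⟨Nat.find hex, Nat.find_spec hex, fun ⟨_, _, F, hF⟩ => ?_⟩
  obtain ⟨k, rfl⟩ := h𝓕 F hF
  simpa [coords] using Nat.find_min' hex hF

theorem mul_col_row {a : ℕ} (ha : Ici a ∈ 𝓕) (hcl : OmegaClosed 𝓕) (r : ℕ) :
    BFmul hcl (0, r, ⟨Ici a, ha⟩) (r, 0, ⟨Ici a, ha⟩) = (0, 0, ⟨Ici a, ha⟩) := by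
  simp [BFmul, show wShift 0 (Ici a) = Ici a from rfl]

theorem eventually_row_col_mem (hcl : OmegaClosed 𝓕) (h𝓕 : ∀ F ∈ 𝓕, ∃ k, F = Ici k) {X : Set (BF 𝓕)}
    (hX : X.Infinite) (hl : ∀ g, ∀ᶠ b in cofinite, b ∈ X → BFmul hcl g b ∈ X)
    (hr : ∀ g, ∀ᶠ b in cofinite, b ∈ X → BFmul hcl b g ∈ X) {a : ℕ} (ha : Ici a ∈ 𝓕)
    (hmin : ∀ b : BF 𝓕, a ≤ (coords b).2.2) :
    ∀ᶠ r in atTop, (r, 0, ⟨Ici a, ha⟩) ∈ X ∧ (0, r, ⟨Ici a, ha⟩) ∈ X := by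
  have hinj := coords_injective h𝓕
  have hXt : (coords '' X).Infinite := hX.image hinj.injOn
  have hmint : ∀ t ∈ coords '' X, a ≤ t.2.2 := forall_mem_image.2 fun b _ => hmin b
  have hlt (i j : ℕ) := eventually_mapsTo_image (g := mulIci (i, j, a))
    (fun b => (coords_mul hcl h𝓕 _ b).trans (by rw [coords_ray ha i j])) (hl (i, j, ⟨Ici a, ha⟩))
  have hrt (i j : ℕ) := eventually_mapsTo_image (g := (mulIci · (i, j, a)))
    (fun b => (coords_mul hcl h𝓕 b _).trans (by rw [coords_ray ha i j])) (hr (i, j, ⟨Ici a, ha⟩))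
  have hmem {i j : ℕ} (h : (i, j, a) ∈ coords '' X) : ((i, j, ⟨Ici a, ha⟩) : BF 𝓕) ∈ X := by
    obtain ⟨b, hb, hcb⟩ := h
    rwa [← hinj (hcb.trans (coords_ray ha i j).symm)]
  filter_upwards [eventually_row_mem hXt hmint (hlt 1 0) (hrt 1 0),
    eventually_col_mem hXt hmint (hlt 0 1) (hrt 0 1)] with r hrow hcol
  exact ⟨hmem hrow, hmem hcol⟩

section Topology

variable {hcl : OmegaClosed 𝓕} [TopologicalSpace (BF0 𝓕)]

theorem isOpen_singleton_some_of_isOpen [T1Space (BF0 𝓕)]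
    (hjc : Continuous fun p : BF0 𝓕 × BF0 𝓕 => BF0mul hcl p.1 p.2)
    (h𝓕 : ∀ F ∈ 𝓕, ∃ k, F = Ici k) {z : BF 𝓕} (hz : IsOpen {some z}) (b : BF 𝓕) :
    IsOpen {some b} := by
  set P := b.1 + (coords b).2.2 + 1
  set Q := b.2.1 + (coords b).2.2 + 1
  let u : BF 𝓕 := (z.1, P, z.2.2)
  let v : BF 𝓕 := (Q, z.2.1, z.2.2)
  let Ψ : BF0 𝓕 → BF0 𝓕 := fun y => BF0mul hcl (BF0mul hcl (some u) y) (some v)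
  have hΨ : Continuous Ψ := hjc.comp₂ (hjc.comp₂ continuous_const continuous_id) continuous_const
  have hcoords (y : BF 𝓕) : coords (BFmul hcl (BFmul hcl u y) v) =
      mulIci (mulIci (z.1, P, (coords z).2.2) (coords y)) (Q, z.2.1, (coords z).2.2) := by
    rw [coords_mul hcl h𝓕, coords_mul hcl h𝓕]
    rfl
  have hb : Ψ (some b) = some z :=
    congrArg some (coords_injective h𝓕 ((hcoords b).trans (mulIci_sandwich (coords z) (coords b))))
  have hfin : {y | BFmul hcl (BFmul hcl u y) v = z}.Finite :=
    ((finite_Iic (P, Q, (coords z).2.2 + P + Q)).preimage (coords_injective h𝓕).injOn).subset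
      fun y hy => le_of_mulIci_sandwich_eq ((hcoords y).symm.trans (congrArg coords hy))
  refine isOpen_singleton_of_finite_mem_nhds _ ((hz.preimage hΨ).mem_nhds hb)
    ((hfin.image some).subset ?_)
  rintro (_ | y) hy
  · exact absurd hy (Option.some_ne_none z).symm
  · exact ⟨y, Option.some_injective _ hy, rfl⟩

theorem isOpen_singleton_none [T2Space (BF0 𝓕)] [LocallyCompactSpace (BF0 𝓕)]
    (hjc : Continuous fun p : BF0 𝓕 × BF0 𝓕 => BF0mul hcl p.1 p.2)
    (h𝓕 : ∀ F ∈ 𝓕, ∃ k, F = Ici k) (hsome : ∀ b : BF 𝓕, IsOpen {some b}) :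
    IsOpen ({none} : Set (BF0 𝓕)) := by
  by_contra hnone
  obtain ⟨K, hKc, hK⟩ := exists_compact_mem_nhds (none : BF0 𝓕)
  have hL : cofinite ⊓ 𝓟 K ≤ 𝓝 none := cofinite_inf_principal_le_nhds hKc fun
    | none, h => absurd rfl h
    | some b, _ => hsome b
  set X := {b : BF 𝓕 | some b ∈ K}
  have hX : X.Infinite := fun hX => hnone <| isOpen_singleton_of_finite_mem_nhds none hK <|
    ((hX.image some).insert none).subset fun
      | none, _ => mem_insert _ _
      | some b, hb => mem_insert_of_mem _ ⟨b, hb, rfl⟩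
  have habsorb {f : BF0 𝓕 → BF0 𝓕} (hf : Continuous f) (hf0 : f none = none) :
      ∀ᶠ b in cofinite, b ∈ X → f (some b) ∈ K :=
    (Option.some_injective _).tendsto_cofinite.eventually
      (eventually_mapsTo_of_continuous hL hK hf hf0)
  obtain ⟨b₀, -⟩ := hX.nonempty
  obtain ⟨a, ha, hmin⟩ := exists_maximal_ray h𝓕 ⟨_, b₀.2.2.2⟩
  have hrc := eventually_row_col_mem hcl h𝓕 hX
    (fun g => habsorb (f := BF0mul hcl (some g)) (hjc.comp₂ continuous_const continuous_id) rfl)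
    (fun g => habsorb (f := (BF0mul hcl · (some g))) (hjc.comp₂ continuous_id continuous_const)
      rfl) ha hmin
  have hcol := tendsto_nhds_of_injective hL
    (e := some ∘ fun r => (0, r, ⟨Ici a, ha⟩))
    ((Option.some_injective _).comp fun _ _ h => congrArg (·.2.1) h)
    (hrc.mono fun _ h => h.2)
  have hrow := tendsto_nhds_of_injective hL
    (e := some ∘ fun r => (r, 0, ⟨Ici a, ha⟩))
    ((Option.some_injective _).comp fun _ _ h => congrArg (·.1) h)
    (hrc.mono fun _ h => h.1)
  have hprod := (hjc.tendsto (none, none)).comp (hcol.prodMk_nhds hrow)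
  simp only [Function.comp_def, BF0mul, mul_col_row] at hprod
  exact Option.some_ne_none _ (tendsto_nhds_unique tendsto_const_nhds hprod)

end Topology

end BF

/-- Theorem 3.10: every Hausdorff locally compact semigroup topology (with jointly
continuous multiplication) on `S = B_ω^𝓕 ∪ {0}` (for an ω-closed family `𝓕` of
nonempty inductive subsets of `ω`) is discrete. -/
theorem statement13 (𝓕 : Set (Set ℕ)) (hcl : OmegaClosed 𝓕)
    (hne : ∀ F ∈ 𝓕, F.Nonempty) (hind : ∀ F ∈ 𝓕, InductiveSet F)
    (τ : TopologicalSpace (BF0 𝓕)) (hT2 : @T2Space _ τ)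
    (hlc : @LocallyCompactSpace _ τ)
    (hjc : @Continuous (BF0 𝓕 × BF0 𝓕) (BF0 𝓕)
      (@instTopologicalSpaceProd _ _ τ τ) τ (fun p => BF0mul hcl p.1 p.2)) :
    τ = ⊥ := by
  have h𝓕 : ∀ F ∈ 𝓕, ∃ k, F = Ici k := fun F hF => ⟨_, (hind F hF).eq_Ici_sInf (hne F hF)⟩
  have : Countable (BF 𝓕) := (BF.coords_injective h𝓕).countable
  have hsome (b : BF 𝓕) : IsOpen[τ] {some b} := by
    have : Nonempty (BF 𝓕) := ⟨b⟩
    obtain ⟨z, hz⟩ := exists_isOpen_singleton_some (α := BF 𝓕)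
    exact BF.isOpen_singleton_some_of_isOpen hjc h𝓕 hz b
  refine eq_bot_of_singletons_open fun
    | none => BF.isOpen_singleton_none hjc h𝓕 hsome
    | some b => hsome b
end

section
/- Let 𝓕 be an ω-closed family of nonempty inductive subsets of ω. Let S be a Hausdorff locally compact semitopological semigroup and I ⊆ S a nonempty compact two-sided ideal of S such that the complement S \ I is a subsemigroup of S isomorphic to B_ω^𝓕 (i.e., there is a multiplication-preserving bijection from B_ω^𝓕 onto S \ I). Then either S is compact or I is an open subset of S. -/
namespace InductiveSet

variable {F : Set ℕ}

theorem add_mem (hF : InductiveSet F) {m : ℕ} (hm : m ∈ F) (k : ℕ) : m + k ∈ F := by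
  induction k with
  | zero => exact hm
  | succ k ih => exact hF _ ih

theorem eq_Ici_sInf_s15 (hF : InductiveSet F) (hne : F.Nonempty) : F = Set.Ici (sInf F) := by
  refine Set.Subset.antisymm (fun x hx => Nat.sInf_le hx) fun x hx => ?_
  obtain ⟨k, rfl⟩ := Nat.exists_eq_add_of_le hx
  exact hF.add_mem (Nat.sInf_mem hne) k

theorem subset_wShift (hF : InductiveSet F) (n : ℕ) : F ⊆ wShift n F :=
  fun _ hx => hF.add_mem hx n

theorem wShift_eq_univ (hF : InductiveSet F) {m n : ℕ} (hm : m ∈ F) (hmn : m ≤ n) :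
    wShift n F = Set.univ :=
  Set.eq_univ_of_forall fun x => by
    have := hF.add_mem hm (x + (n - m))
    rwa [show m + (x + (n - m)) = x + n by omega] at this

end InductiveSet

theorem Nat.le_induction₂ {P : ℕ → ℕ → Prop} {i₀ j₀ : ℕ} (h₀ : P i₀ j₀)
    (hi : ∀ i j, i₀ ≤ i → j₀ ≤ j → P i j → P (i + 1) j)
    (hj : ∀ i j, i₀ ≤ i → j₀ ≤ j → P i j → P i (j + 1))
    {i j : ℕ} (hii : i₀ ≤ i) (hjj : j₀ ≤ j) : P i j := by
  induction j, hjj using Nat.le_induction with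
  | base =>
    induction i, hii using Nat.le_induction with
    | base => exact h₀
    | succ i hii ih => exact hi i j₀ hii le_rfl ih
  | succ j hjj ih => exact hj i j hii hjj ih

namespace BF

variable {𝓕 : Set (Set ℕ)}

noncomputable def size (x : BF 𝓕) : ℕ := x.1 + x.2.1 + sInf x.2.2.1

theorem coords_injective_s15 (hne : ∀ F ∈ 𝓕, F.Nonempty) (hind : ∀ F ∈ 𝓕, InductiveSet F) :
    Function.Injective fun x : BF 𝓕 => (x.1, x.2.1, sInf x.2.2.1) := by
  rintro ⟨i, j, F, hF⟩ ⟨i', j', G, hG⟩ h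
  simp only [Prod.mk.injEq] at h
  obtain ⟨rfl, rfl, h⟩ := h
  have : F = G := by
    rw [(hind F hF).eq_Ici_sInf_s15 (hne F hF), (hind G hG).eq_Ici_sInf_s15 (hne G hG), h]
  subst this
  rfl

theorem finite_setOf_size_le (hne : ∀ F ∈ 𝓕, F.Nonempty) (hind : ∀ F ∈ 𝓕, InductiveSet F)
    (N : ℕ) : {x : BF 𝓕 | size x ≤ N}.Finite := by
  refine (((Set.finite_Iic N).prod ((Set.finite_Iic N).prod (Set.finite_Iic N))).preimage
    (coords_injective_s15 hne hind).injOn).subset fun x hx => ?_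
  replace hx : size x ≤ N := hx
  simp only [size] at hx
  simp only [Set.mem_preimage, Set.mem_prod, Set.mem_Iic]
  omega

theorem countable (hne : ∀ F ∈ 𝓕, F.Nonempty) (hind : ∀ F ∈ 𝓕, InductiveSet F) :
    Countable (BF 𝓕) :=
  (coords_injective_s15 hne hind).countable

theorem exists_mem_forall_subset (hne : ∀ F ∈ 𝓕, F.Nonempty) (hind : ∀ F ∈ 𝓕, InductiveSet F)
    (h𝓕 : 𝓕.Nonempty) : ∃ T ∈ 𝓕, ∀ F ∈ 𝓕, F ⊆ T := by
  obtain ⟨T, hT, hTmin⟩ := Nat.sInf_mem (h𝓕.image sInf)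
  refine ⟨T, hT, fun F hF => ?_⟩
  rw [(hind F hF).eq_Ici_sInf_s15 (hne F hF), (hind T hT).eq_Ici_sInf_s15 (hne T hT), hTmin]
  exact Set.Ici_subset_Ici.2 (Nat.sInf_le (Set.mem_image_of_mem _ hF))

variable (hcl : OmegaClosed 𝓕)

theorem size_le_size_mul_left (hne : ∀ F ∈ 𝓕, F.Nonempty) (u x : BF 𝓕) :
    size x ≤ size (BFmul hcl u x) + 2 * size u := by
  have hw := Nat.sInf_mem (hne _ (BFmul hcl u x).2.2.2)
  obtain ⟨i, j, F, hF⟩ := u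
  obtain ⟨k, l, G, hG⟩ := x
  simp only [BFmul, size] at hw ⊢
  split_ifs at hw ⊢ with h
  · have := Nat.sInf_le hw.2
    dsimp only at this ⊢
    omega
  · have := Nat.sInf_le (s := G) hw.2
    dsimp only at this ⊢
    omega

theorem size_le_size_mul_right (hne : ∀ F ∈ 𝓕, F.Nonempty) (x v : BF 𝓕) :
    size x ≤ size (BFmul hcl x v) + 2 * size v := by
  have hw := Nat.sInf_mem (hne _ (BFmul hcl x v).2.2.2)
  obtain ⟨i, j, F, hF⟩ := x
  obtain ⟨k, l, G, hG⟩ := v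
  simp only [BFmul, size] at hw ⊢
  split_ifs at hw ⊢ with h
  · have := Nat.sInf_le (s := F) hw.1
    dsimp only at this ⊢
    omega
  · have := Nat.sInf_le hw.1
    dsimp only at this ⊢
    omega

theorem finite_setOf_mul_mul_eq (hne : ∀ F ∈ 𝓕, F.Nonempty) (hind : ∀ F ∈ 𝓕, InductiveSet F)
    (u v t : BF 𝓕) : {x | BFmul hcl (BFmul hcl u x) v = t}.Finite :=
  (finite_setOf_size_le hne hind (size t + 2 * size v + 2 * size u)).subset fun x hx => by
    have hl := size_le_size_mul_left hcl hne u x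
    have hr := size_le_size_mul_right hcl hne (BFmul hcl u x) v
    rw [show BFmul hcl (BFmul hcl u x) v = t from hx] at hr
    show size x ≤ _
    omega

theorem ext {x y : BF 𝓕} (h₁ : x.1 = y.1) (h₂ : x.2.1 = y.2.1) (h₃ : x.2.2.1 = y.2.2.1) :
    x = y :=
  Prod.ext h₁ (Prod.ext h₂ (Subtype.ext h₃))

section Formulas

variable {T F G : {F // F ∈ 𝓕}}

theorem one_zero_mul (hT : InductiveSet T.1) (hFT : F.1 ⊆ T.1) (i j : ℕ) :
    BFmul hcl (1, 0, T) (i, j, F) = (i + 1, j, F) := by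
  rw [BFmul, if_pos (Nat.zero_le i)]
  exact ext (by dsimp only; omega) rfl
    (Set.inter_eq_right.2 (hFT.trans (hT.subset_wShift _)))

theorem zero_one_mul (hT : InductiveSet T.1) (hFT : F.1 ⊆ T.1) (i j : ℕ) :
    BFmul hcl (0, 1, T) (i + 1, j, F) = (i, j, F) := by
  rw [BFmul, if_pos (Nat.le_add_left 1 i)]
  exact ext (by dsimp only; omega) rfl
    (Set.inter_eq_right.2 (hFT.trans (hT.subset_wShift _)))

theorem mul_zero_one (hT : InductiveSet T.1) (hFT : F.1 ⊆ T.1) (i j : ℕ) :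
    BFmul hcl (i, j, F) (0, 1, T) = (i, j + 1, F) := by
  rcases Nat.eq_zero_or_pos j with rfl | hj
  · rw [BFmul, if_pos le_rfl]
    exact ext rfl rfl (Set.inter_eq_left.2 hFT)
  · rw [BFmul, if_neg hj.not_ge]
    exact ext rfl (by dsimp only; omega)
      (Set.inter_eq_left.2 (hFT.trans (hT.subset_wShift _)))

theorem mul_one_zero (hT : InductiveSet T.1) (hFT : F.1 ⊆ T.1) (i j : ℕ) :
    BFmul hcl (i, j + 1, F) (1, 0, T) = (i, j, F) := by
  rcases Nat.eq_zero_or_pos j with rfl | hj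
  · rw [BFmul, if_pos le_rfl]
    exact ext rfl rfl (Set.inter_eq_left.2 hFT)
  · rw [BFmul, if_neg (show ¬j + 1 ≤ 1 by omega)]
    exact ext rfl (by dsimp only; omega)
      (Set.inter_eq_left.2 (hFT.trans (hT.subset_wShift _)))

theorem mul_mk_add_of_mem (hF : InductiveSet F.1) {m : ℕ} (hm : m ∈ F.1) (i j b : ℕ) :
    BFmul hcl (i, j, F) (j + m, b, G) = (i + m, b, G) := by
  rw [BFmul, if_pos (Nat.le_add_right j m)]
  refine ext (by dsimp only; omega) rfl ?_
  show wShift (j + m - j) F.1 ∩ G.1 = G.1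
  rw [add_tsub_cancel_left, hF.wShift_eq_univ hm le_rfl]
  exact Set.univ_inter _

theorem mk_add_mul_of_mem (hF : InductiveSet F.1) {m : ℕ} (hm : m ∈ F.1) (a i j : ℕ) :
    BFmul hcl (a, i + m + 1, G) (i, j, F) = (a, j + m + 1, G) := by
  rw [BFmul, if_neg (show ¬i + m + 1 ≤ i by omega)]
  refine ext rfl (by dsimp only; omega) ?_
  show G.1 ∩ wShift (i + m + 1 - i) F.1 = G.1
  rw [hF.wShift_eq_univ hm (show m ≤ i + m + 1 - i by omega)]
  exact Set.inter_univ _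

theorem mul_diag (a k b : ℕ) : BFmul hcl (a, k, G) (k, b, G) = (a, b, G) := by
  rw [BFmul, if_pos le_rfl]
  exact ext (by dsimp only; omega) rfl (Set.inter_eq_right.2 fun x hx => by simpa [wShift])

end Formulas

theorem size_mono {F : {F // F ∈ 𝓕}} {i j k l : ℕ} (hik : i ≤ k) (hjl : j ≤ l) :
    size ((i, j, F) : BF 𝓕) ≤ size (k, l, F) := by
  simp only [size]
  omega

section Quadrant

variable {𝒜 : Set (BF 𝓕)} {T F : {F // F ∈ 𝓕}} {N i j i' j' : ℕ}

theorem mem_of_le_of_mem (hT : InductiveSet T.1) (hTmax : ∀ F ∈ 𝓕, F ⊆ T.1)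
    (hp : ∀ x, N < size x → x ∈ 𝒜 → BFmul hcl (1, 0, T) x ∈ 𝒜)
    (hq : ∀ x, N < size x → x ∈ 𝒜 → BFmul hcl x (0, 1, T) ∈ 𝒜)
    (hN : N < size (i, j, F)) (hA : (i, j, F) ∈ 𝒜) (hi : i ≤ i') (hj : j ≤ j') :
    (i', j', F) ∈ 𝒜 := by
  refine Nat.le_induction₂ (P := fun k l => ((k, l, F) : BF 𝓕) ∈ 𝒜) hA
    (fun k l hk hl h => ?_) (fun k l hk hl h => ?_) hi hj
  · rw [← one_zero_mul hcl hT (hTmax _ F.2)]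
    exact hp _ (hN.trans_le (size_mono hk hl)) h
  · rw [← mul_zero_one hcl hT (hTmax _ F.2)]
    exact hq _ (hN.trans_le (size_mono hk hl)) h

theorem notMem_of_le_of_notMem (hT : InductiveSet T.1) (hTmax : ∀ F ∈ 𝓕, F ⊆ T.1)
    (hq : ∀ x, N < size x → x ∈ 𝒜 → BFmul hcl (0, 1, T) x ∈ 𝒜)
    (hp : ∀ x, N < size x → x ∈ 𝒜 → BFmul hcl x (1, 0, T) ∈ 𝒜)
    (hN : N < size (i, j, F)) (hA : (i, j, F) ∉ 𝒜) (hi : i ≤ i') (hj : j ≤ j') :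
    (i', j', F) ∉ 𝒜 := by
  refine Nat.le_induction₂ (P := fun k l => ((k, l, F) : BF 𝓕) ∉ 𝒜) hA
    (fun k l hk hl h h' => h ?_) (fun k l hk hl h h' => h ?_) hi hj
  · rw [← zero_one_mul hcl hT (hTmax _ F.2) k l]
    exact hq _ (hN.trans_le (size_mono (hk.trans (Nat.le_succ k)) hl)) h'
  · rw [← mul_one_zero hcl hT (hTmax _ F.2) k l]
    exact hp _ (hN.trans_le (size_mono hk (hl.trans (Nat.le_succ l)))) h'

end Quadrant

theorem finite_or_finite_compl (hne : ∀ F ∈ 𝓕, F.Nonempty) (hind : ∀ F ∈ 𝓕, InductiveSet F)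
    {𝒜 : Set (BF 𝓕)} (hR : ∀ v, (𝒜 \ (fun x => BFmul hcl x v) ⁻¹' 𝒜).Finite)
    (hL : ∀ u, (𝒜 \ (fun x => BFmul hcl u x) ⁻¹' 𝒜).Finite) : 𝒜.Finite ∨ 𝒜ᶜ.Finite := by
  by_contra! h
  obtain ⟨hA, hD⟩ := h
  obtain ⟨x₀, -⟩ := hA.nonempty
  obtain ⟨T, hT, hTmax⟩ := exists_mem_forall_subset hne hind ⟨_, x₀.2.2.2⟩
  set p : BF 𝓕 := (1, 0, ⟨T, hT⟩)
  set q : BF 𝓕 := (0, 1, ⟨T, hT⟩)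
  obtain ⟨N, hN⟩ := ((((hL p).union (hL q)).union ((hR p).union (hR q))).image size).bddAbove
  have hpl : ∀ x, N < size x → x ∈ 𝒜 → BFmul hcl p x ∈ 𝒜 := fun x hx hxA =>
    by_contra fun h => hx.not_ge (hN ⟨x, .inl (.inl ⟨hxA, h⟩), rfl⟩)
  have hql : ∀ x, N < size x → x ∈ 𝒜 → BFmul hcl q x ∈ 𝒜 := fun x hx hxA =>
    by_contra fun h => hx.not_ge (hN ⟨x, .inl (.inr ⟨hxA, h⟩), rfl⟩)
  have hpr : ∀ x, N < size x → x ∈ 𝒜 → BFmul hcl x p ∈ 𝒜 := fun x hx hxA =>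
    by_contra fun h => hx.not_ge (hN ⟨x, .inr (.inl ⟨hxA, h⟩), rfl⟩)
  have hqr : ∀ x, N < size x → x ∈ 𝒜 → BFmul hcl x q ∈ 𝒜 := fun x hx hxA =>
    by_contra fun h => hx.not_ge (hN ⟨x, .inr (.inr ⟨hxA, h⟩), rfl⟩)
  obtain ⟨⟨i, j, F⟩, hxA, hxN⟩ := (hA.sdiff (finite_setOf_size_le hne hind N)).nonempty
  obtain ⟨⟨a, b, G⟩, hzA, hzN⟩ := (hD.sdiff (finite_setOf_size_le hne hind N)).nonempty
  have hFm : sInf F.1 ∈ F.1 := Nat.sInf_mem (hne _ F.2)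
  have hrow : ∀ k, ((i + k, j, F) : BF 𝓕) ∈ 𝒜 := fun k =>
    mem_of_le_of_mem hcl (hind T hT) hTmax hpl hqr (not_le.1 hxN) hxA (Nat.le_add_right i k) le_rfl
  have hrow_inj : Function.Injective fun k => ((i + k, j, F) : BF 𝓕) :=
    fun k l h => by simpa using congrArg Prod.fst h
  -- Right multiplication by `(j + min F, N + 1, G)` carries row `j` of layer `F` into row `N + 1`
  -- of layer `G`, and leaves `𝒜` for only finitely many points of that row.
  obtain ⟨k, hk⟩ := ((hR (j + sInf F.1, N + 1, G)).preimage hrow_inj.injOn).exists_notMem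
  have hy : ((i + k + sInf F.1, N + 1, G) : BF 𝓕) ∈ 𝒜 := by
    rw [← mul_mk_add_of_mem hcl (hind _ F.2) hFm]
    exact by_contra fun h => hk ⟨hrow k, h⟩
  have hyN : N < size ((i + k + sInf F.1, N + 1, G) : BF 𝓕) := by
    simp only [size]
    omega
  exact notMem_of_le_of_notMem hcl (hind T hT) hTmax hql hpr (not_le.1 hzN) hzA
    (le_max_right (i + k + sInf F.1) a) (le_max_right (N + 1) b)
    (mem_of_le_of_mem hcl (hind T hT) hTmax hpl hqr hyN hy (le_max_left _ a) (le_max_left _ b))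

end BF

section Topology

variable {X : Type*} [TopologicalSpace X]

theorem exists_isOpen_singleton_of_countable [T1Space X] [BaireSpace X] [Countable X]
    [Nonempty X] : ∃ x : X, IsOpen {x} := by
  obtain ⟨x, hx⟩ := nonempty_interior_of_iUnion_of_closed (f := fun x : X => {x})
    (fun _ => isClosed_singleton) (Set.iUnion_of_singleton X)
  exact ⟨x, interior_eq_iff_isOpen.1 (hx.subset_singleton_iff.1 interior_subset)⟩

theorem IsOpen.exists_isOpen_singleton_of_countable [T2Space X] [LocallyCompactSpace X]
    {U : Set X} (hU : IsOpen U) (hc : U.Countable) (hne : U.Nonempty) :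
    ∃ x ∈ U, IsOpen {x} := by
  have := hU.locallyCompactSpace
  have := hc.to_subtype
  have := hne.to_subtype
  obtain ⟨y, hy⟩ := _root_.exists_isOpen_singleton_of_countable (X := U)
  exact ⟨y, y.2, by simpa using hU.isOpenMap_subtype_val _ hy⟩

theorem IsCompact.exists_isCompact_isOpen_superset [WeaklyLocallyCompactSpace X] {I : Set X}
    (hI : IsCompact I) (hiso : ∀ x ∉ I, IsOpen {x}) : ∃ K, IsCompact K ∧ IsOpen K ∧ I ⊆ K := by
  obtain ⟨K, hK, hIK⟩ := exists_compact_superset hI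
  refine ⟨K, hK, isOpen_iff_mem_nhds.2 fun x hx => ?_, hIK.trans interior_subset⟩
  by_cases hxI : x ∈ I
  · exact mem_interior_iff_mem_nhds.1 (hIK hxI)
  · exact Filter.mem_of_superset ((hiso x hxI).mem_nhds rfl) (Set.singleton_subset_iff.2 hx)

theorem IsCompact.finite_of_isOpen_singleton {s : Set X} (hs : IsCompact s)
    (hiso : ∀ x ∈ s, IsOpen {x}) : s.Finite :=
  hs.finite <| isDiscrete_iff_forall_mem_exists_isOpen.2 fun x hx =>
    ⟨{x}, hiso x hx, Set.singleton_inter_of_mem hx⟩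

theorem IsCompact.finite_diff_preimage {K I : Set X} {f : X → X} (hKc : IsCompact K)
    (hKo : IsOpen K) (hf : Continuous f) (hIK : I ⊆ f ⁻¹' K) (hiso : ∀ x ∉ I, IsOpen {x}) :
    (K \ f ⁻¹' K).Finite :=
  (hKc.diff (hKo.preimage hf)).finite_of_isOpen_singleton fun x hx =>
    hiso x fun hxI => hx.2 (hIK hxI)

end Topology

theorem Function.Semiconj.finite_diff_preimage {α β : Type*} {φ : α → β} {g : α → α}
    {f : β → β} (h : Function.Semiconj φ g f) (hφ : Function.Injective φ) {K : Set β}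
    (hK : (K \ f ⁻¹' K).Finite) : (φ ⁻¹' K \ g ⁻¹' (φ ⁻¹' K)).Finite := by
  rw [← Set.preimage_comp, h.comp_eq, Set.preimage_comp, ← Set.preimage_sdiff]
  exact hK.preimage hφ.injOn

section Embedding

variable {𝓕 : Set (Set ℕ)} {hcl : OmegaClosed 𝓕} {S : Type*} [Mul S] [TopologicalSpace S]
  {I : Set S} {φ : BF 𝓕 → S}

theorem isOpen_singleton_apply_of_isOpen [T1Space S] (hne : ∀ F ∈ 𝓕, F.Nonempty)
    (hind : ∀ F ∈ 𝓕, InductiveSet F)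
    (hsc : ∀ a : S, Continuous (fun x => a * x) ∧ Continuous (fun x => x * a))
    (hIideal : ∀ x y : S, (x ∈ I ∨ y ∈ I) → x * y ∈ I)
    (hφmul : ∀ x y : BF 𝓕, φ (BFmul hcl x y) = φ x * φ y) (hinj : Function.Injective φ)
    (hrange : Set.range φ = Iᶜ) {t : BF 𝓕} (ht : IsOpen {φ t}) (x : BF 𝓕) : IsOpen {φ x} := by
  obtain ⟨i, j, F⟩ := x
  obtain ⟨a, b, G⟩ := t
  set u : BF 𝓕 := (a, i + sInf F.1 + 1, G)
  set v : BF 𝓕 := (j + sInf F.1 + 1, b, G)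
  have huv : BFmul hcl (BFmul hcl u (i, j, F)) v = (a, b, G) := by
    rw [BF.mk_add_mul_of_mem hcl (hind _ F.2) (Nat.sInf_mem (hne _ F.2)), BF.mul_diag]
  set f : S → S := fun w => φ u * w * φ v
  have hf : Continuous f := (hsc (φ v)).2.comp (hsc (φ u)).1
  have htI : φ (a, b, G) ∉ I := by
    rw [← Set.mem_compl_iff, ← hrange]
    exact Set.mem_range_self _
  have hsub : f ⁻¹' {φ (a, b, G)} ⊆ φ '' {y | BFmul hcl (BFmul hcl u y) v = (a, b, G)} := by
    intro w hw
    rw [Set.mem_preimage, Set.mem_singleton_iff] at hw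
    have hwI : w ∉ I := fun hwI => htI (hw ▸ hIideal _ _ (Or.inl (hIideal _ _ (Or.inr hwI))))
    obtain ⟨y, rfl⟩ : w ∈ Set.range φ := hrange ▸ hwI
    exact ⟨y, hinj (by rw [hφmul, hφmul]; exact hw), rfl⟩
  refine isOpen_singleton_of_finite_mem_nhds _ ((ht.preimage hf).mem_nhds ?_)
    (((BF.finite_setOf_mul_mul_eq hcl hne hind u v _).image φ).subset hsub)
  rw [Set.mem_preimage, Set.mem_singleton_iff, ← huv, hφmul, hφmul]

theorem isOpen_singleton_of_notMem [T2Space S] [LocallyCompactSpace S]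
    (hne : ∀ F ∈ 𝓕, F.Nonempty) (hind : ∀ F ∈ 𝓕, InductiveSet F)
    (hsc : ∀ a : S, Continuous (fun x => a * x) ∧ Continuous (fun x => x * a))
    (hIideal : ∀ x y : S, (x ∈ I ∨ y ∈ I) → x * y ∈ I)
    (hφmul : ∀ x y : BF 𝓕, φ (BFmul hcl x y) = φ x * φ y) (hinj : Function.Injective φ)
    (hrange : Set.range φ = Iᶜ) (hI : IsClosed I) {w : S} (hw : w ∉ I) : IsOpen {w} := by
  have := BF.countable hne hind
  rw [← Set.mem_compl_iff, ← hrange] at hw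
  have hB : IsOpen (Set.range φ) := hrange ▸ hI.isOpen_compl
  obtain ⟨_, ⟨t, rfl⟩, ht⟩ :=
    hB.exists_isOpen_singleton_of_countable (Set.countable_range φ) ⟨w, hw⟩
  obtain ⟨x, rfl⟩ := hw
  exact isOpen_singleton_apply_of_isOpen hne hind hsc hIideal hφmul hinj hrange ht x

end Embedding

theorem statement15_general (𝓕 : Set (Set ℕ)) (hcl : OmegaClosed 𝓕)
    (hne𝓕 : ∀ F ∈ 𝓕, F.Nonempty) (hind : ∀ F ∈ 𝓕, InductiveSet F)
    {S : Type*} [Semigroup S] [TopologicalSpace S] [T2Space S] [LocallyCompactSpace S]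
    (hsc : ∀ a : S, Continuous (fun x => a * x) ∧ Continuous (fun x => x * a))
    (I : Set S) (hIcomp : IsCompact I)
    (hIideal : ∀ x y : S, (x ∈ I ∨ y ∈ I) → x * y ∈ I)
    (φ : BF 𝓕 → S) (hφmul : ∀ x y : BF 𝓕, φ (BFmul hcl x y) = φ x * φ y)
    (hinj : Function.Injective φ) (hrange : Set.range φ = Iᶜ) :
    CompactSpace S ∨ IsOpen I := by
  have hiso : ∀ w ∉ I, IsOpen {w} := fun w =>
    isOpen_singleton_of_notMem hne𝓕 hind hsc hIideal hφmul hinj hrange hIcomp.isClosed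
  obtain ⟨K, hKc, hKo, hIK⟩ := hIcomp.exists_isCompact_isOpen_superset hiso
  have hesc : ∀ f : S → S, Continuous f → I ⊆ f ⁻¹' K → ∀ g : BF 𝓕 → BF 𝓕,
      Function.Semiconj φ g f → (φ ⁻¹' K \ g ⁻¹' (φ ⁻¹' K)).Finite :=
    fun f hf hIf g hg => hg.finite_diff_preimage hinj (hKc.finite_diff_preimage hKo hf hIf hiso)
  rcases BF.finite_or_finite_compl hcl hne𝓕 hind
    (fun v => hesc _ (hsc _).2 (fun w hw => hIK (hIideal _ _ (Or.inl hw))) _ (hφmul · v))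
    (fun u => hesc _ (hsc _).1 (fun w hw => hIK (hIideal _ _ (Or.inr hw))) _ (hφmul u ·))
    with hfin | hfin
  · have hI : I = K \ φ '' (φ ⁻¹' K) := by
      rw [Set.image_preimage_eq_inter_range, hrange]
      ext w
      have := @hIK w
      simp only [Set.mem_sdiff, Set.mem_inter_iff, Set.mem_compl_iff]
      tauto
    exact Or.inr (hI ▸ hKo.sdiff (hfin.image φ).isClosed)
  · have huniv : K ∪ φ '' (φ ⁻¹' K)ᶜ = Set.univ := by
      rw [← Set.preimage_compl, Set.image_preimage_eq_inter_range, hrange]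
      refine Set.eq_univ_of_forall fun w => ?_
      have := @hIK w
      simp only [Set.mem_union, Set.mem_inter_iff, Set.mem_compl_iff]
      tauto
    exact Or.inl ⟨huniv ▸ hKc.union (hfin.image φ).isCompact⟩

/-- Theorem 3.14: let `S` be a Hausdorff locally compact semitopological semigroup
containing a nonempty compact two-sided ideal `I` such that `S \ I` is a subsemigroup
isomorphic to `B_ω^𝓕`, for an ω-closed family `𝓕` of nonempty inductive subsets of
`ω`. Then either `S` is compact or `I` is open. -/
theorem statement15 (𝓕 : Set (Set ℕ)) (hcl : OmegaClosed 𝓕)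
    (hne𝓕 : ∀ F ∈ 𝓕, F.Nonempty) (hind : ∀ F ∈ 𝓕, InductiveSet F)
    {S : Type*} [Semigroup S] [TopologicalSpace S] [T2Space S] [LocallyCompactSpace S]
    (hsc : ∀ a : S, Continuous (fun x => a * x) ∧ Continuous (fun x => x * a))
    (I : Set S) (hIne : I.Nonempty) (hIcomp : IsCompact I)
    (hIideal : ∀ x y : S, (x ∈ I ∨ y ∈ I) → x * y ∈ I)
    (φ : BF 𝓕 → S) (hφmul : ∀ x y : BF 𝓕, φ (BFmul hcl x y) = φ x * φ y)
    (hinj : Function.Injective φ) (hrange : Set.range φ = Iᶜ) :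
    CompactSpace S ∨ IsOpen I :=
  statement15_general 𝓕 hcl hne𝓕 hind hsc I hIcomp hIideal φ hφmul hinj hrange
end
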